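/- Let k ≥ 1 be an integer, λ > 0, α ∈ (0,1), and let q_{α,k}(n,t) = ∑_{r=0}^∞ ((−(kλ)^α t)^r / r!) · ∑_{x ∈ Ω(k,n)} (−1)^{ζ(x)} (∏_{l=0}^{ζ(x)−1}(αr − l)) / (Π!(x) · k^{ζ(x)}) be the probability mass function of the space-fractional Poisson process of order k. Then for every n ≥ 0 and t > 0, (d/dt) q_{α,k}(n,t) = −(kλ)^α ∑_{x} (−1)^{ζ(x)} (∏_{l=0}^{ζ(x)−1}(α − l)) / (Π!(x) · k^{ζ(x)}) · q_{α,k}(n − w(x), t), where the (finite) sum ranges over all tuples x = (x₁,…,x_k) of non-negative integers with weight w(x) = x₁ + 2x₂ + ⋯ + kx_k ≤ n. This is the differential–difference equation (d/dt)q = −k^α λ^α (1 − (1/k)∑_{j=1}^k B^j)^α q, where B is the backward shift operator and terms shifting below index 0 vanish. -/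

import Mathlib

open scoped BigOperators

/-- `Omega k n` is the (finite) set of tuples `(x₁,…,x_k)` of non-negative integers with
`x₁ + 2·x₂ + ⋯ + k·x_k = n`. -/
def Omega (k n : ℕ) : Finset (Fin k → ℕ) :=
  (Fintype.piFinset fun _ => Finset.range (n + 1)).filter
    (fun x => ∑ i, (i.1 + 1) * x i = n)

/-- `ζ(x) = x₁ + ⋯ + x_k`. -/
def zeta {k : ℕ} (x : Fin k → ℕ) : ℕ := ∑ i, x i

/-- `Π!(x) = x₁! ⋯ x_k!`. -/
def pifact {k : ℕ} (x : Fin k → ℕ) : ℕ := ∏ i, (x i).factorial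

/-- `c_k(n, y) = ∑_{x ∈ Ω(k,n)} y^{ζ(x)} / Π!(x)`. -/
noncomputable def ck (k n : ℕ) (y : ℝ) : ℝ :=
  ∑ x ∈ Omega k n, y ^ zeta x / (pifact x : ℝ)

/-- The pmf of the space-fractional Poisson process of order `k`. -/
noncomputable def qk (k : ℕ) (lam α : ℝ) (n : ℕ) (t : ℝ) : ℝ :=
  ∑' r : ℕ, ((-((k * lam) ^ α) * t) ^ r / r.factorial) *
    ∑ x ∈ Omega k n,
      (-1 : ℝ) ^ zeta x * (∏ l ∈ Finset.range (zeta x), (α * r - l)) /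
        ((pifact x : ℝ) * (k : ℝ) ^ zeta x)

/-! The inner sum in `qk` is the coefficient `a_n(β)` of `zⁿ` in `(1 - u(z))^β`, where
`u(z) = (z + ⋯ + z^k)/k`, evaluated at `β = αr`; as a function of `β` it comes from substituting
`-u` into the binomial series, so `a(β + γ) = a(β) * a(γ)` as power series (Chu–Vandermonde).
Thus `q(n, ·)` is the exponential generating function `∑ (-(kλ)^α t)^r / r! · a_n(αr)`, and
differentiating it termwise shifts `r ↦ r + 1`, i.e. `αr ↦ α + αr`; the convolution
`a_n(α + αr) = ∑_m a_m(α) a_{n-m}(αr)` then produces the right-hand side. -/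

open Finset PowerSeries

lemma mem_Omega {k n : ℕ} {x : Fin k → ℕ} : x ∈ Omega k n ↔ ∑ i, (i.1 + 1) * x i = n := by
  refine ⟨fun hx => (mem_filter.mp hx).2, fun hx => mem_filter.mpr ⟨?_, hx⟩⟩
  refine Fintype.mem_piFinset.mpr fun a => mem_range_succ_iff.mpr ?_
  calc x a ≤ (a.1 + 1) * x a := Nat.le_mul_of_pos_left _ a.1.succ_pos
    _ ≤ ∑ i, (i.1 + 1) * x i :=
      single_le_sum (f := fun i : Fin k => (i.1 + 1) * x i) (fun _ _ => Nat.zero_le _) (mem_univ a)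
    _ = n := hx

lemma zeta_le_of_mem_Omega {k n : ℕ} {x : Fin k → ℕ} (hx : x ∈ Omega k n) : zeta x ≤ n :=
  (sum_le_sum fun i _ => Nat.le_mul_of_pos_left (x i) i.1.succ_pos).trans_eq (mem_Omega.mp hx)

lemma Ring.choose_eq_prod_range_div_factorial {K : Type*} [Field K] [CharZero K]
    (a : K) (i : ℕ) : Ring.choose a i = (∏ l ∈ range i, (a - l)) / i.factorial := by
  rw [Ring.choose_eq_smul, ← Polynomial.aeval_eq_smeval, Polynomial.aeval_def,
    ← Polynomial.eval_map, descPochhammer_map, descPochhammer_eval_eq_prod_range,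
    smul_eq_mul, div_eq_inv_mul]

/-- `u = (z + ⋯ + z^k) / k`, so that `fracDiffSeries k β = (1 - u)^β` is the symbol of the
operator `(1 - (1/k) ∑_{j=1}^k B^j)^β`. -/
noncomputable def uniformJumpSeries (k : ℕ) : ℝ⟦X⟧ := ∑ j : Fin k, C (k : ℝ)⁻¹ * X ^ (j.1 + 1)

lemma prod_C_mul_X_pow_pow {R : Type*} [CommSemiring R] {k : ℕ} (a : R) (x : Fin k → ℕ) :
    ∏ j, (C a * X ^ (j.1 + 1) : R⟦X⟧) ^ x j = C (a ^ zeta x) * X ^ ∑ j, (j.1 + 1) * x j := by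
  simp only [mul_pow, prod_mul_distrib, ← map_pow, ← map_prod, prod_pow_eq_pow_sum, ← pow_mul]
  rfl

lemma coeff_uniformJumpSeries_pow (k i n : ℕ) :
    coeff n (uniformJumpSeries k ^ i) =
      ∑ x ∈ (Omega k n).filter (zeta · = i), (k : ℝ)⁻¹ ^ i * Nat.multinomial univ x := by
  have hterm : ∀ x ∈ univ.piAntidiag i,
      coeff n ((Nat.multinomial univ x : ℝ⟦X⟧) * ∏ j, (C (k : ℝ)⁻¹ * X ^ (j.1 + 1)) ^ x j) =
        if x ∈ Omega k n then (k : ℝ)⁻¹ ^ i * Nat.multinomial univ x else 0 := by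
    intro x hx
    rw [prod_C_mul_X_pow_pow, ← map_natCast (C (R := ℝ)), ← mul_assoc, ← map_mul,
      coeff_C_mul_X_pow, show zeta x = i from (mem_piAntidiag.mp hx).1]
    simp only [mem_Omega, @eq_comm _ n, mul_comm]
  rw [uniformJumpSeries, sum_pow_eq_sum_piAntidiag, map_sum, sum_congr rfl hterm, ← sum_filter]
  refine sum_congr ?_ fun _ _ => rfl
  ext x
  simp only [mem_filter, mem_piAntidiag, mem_univ, implies_true, and_true]
  exact and_comm

lemma coeff_uniformJumpSeries_pow_of_lt {k i n : ℕ} (h : n < i) :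
    coeff n (uniformJumpSeries k ^ i) = 0 := by
  rw [coeff_uniformJumpSeries_pow, sum_eq_zero]
  intro x hx
  obtain ⟨hxΩ, rfl⟩ := mem_filter.mp hx
  exact absurd (zeta_le_of_mem_Omega hxΩ) h.not_ge

lemma hasSubst_neg_uniformJumpSeries (k : ℕ) : HasSubst (-uniformJumpSeries k) :=
  HasSubst.of_constantCoeff_zero' (by simp [uniformJumpSeries])

noncomputable def fracDiffSeries (k : ℕ) (β : ℝ) : ℝ⟦X⟧ :=
  (PowerSeries.binomialSeries ℝ β).subst (-uniformJumpSeries k)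

lemma fracDiffSeries_add (k : ℕ) (β γ : ℝ) :
    fracDiffSeries k (β + γ) = fracDiffSeries k β * fracDiffSeries k γ := by
  rw [fracDiffSeries, binomialSeries_add, subst_mul (hasSubst_neg_uniformJumpSeries k)]
  rfl

noncomputable def fracDiffCoeff (k : ℕ) (β : ℝ) (n : ℕ) : ℝ :=
  ∑ x ∈ Omega k n, (-1 : ℝ) ^ zeta x * (∏ l ∈ range (zeta x), (β - l)) /
    ((pifact x : ℝ) * (k : ℝ) ^ zeta x)

lemma coeff_fracDiffSeries (k : ℕ) (β : ℝ) (n : ℕ) :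
    coeff n (fracDiffSeries k β) = fracDiffCoeff k β n := by
  have hsupp : Function.support (fun i => coeff i (PowerSeries.binomialSeries ℝ β) •
      coeff n ((-uniformJumpSeries k) ^ i)) ⊆ range (n + 1) := by
    refine Function.support_subset_iff'.mpr fun i hi => ?_
    rw [mem_coe, mem_range, not_lt] at hi
    rw [← neg_one_smul ℝ (uniformJumpSeries k), smul_pow, map_smul,
      coeff_uniformJumpSeries_pow_of_lt hi, smul_zero, smul_zero]
  rw [fracDiffSeries, coeff_subst' (hasSubst_neg_uniformJumpSeries k),
    finsum_eq_sum_of_support_subset _ hsupp, fracDiffCoeff,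
    ← sum_fiberwise_of_maps_to (g := zeta) (t := range (n + 1))
      fun x hx => mem_range_succ_iff.mpr (zeta_le_of_mem_Omega hx)]
  refine sum_congr rfl fun i _ => ?_
  rw [← neg_one_smul ℝ (uniformJumpSeries k), smul_pow, map_smul, coeff_uniformJumpSeries_pow,
    binomialSeries_coeff, smul_eq_mul, smul_eq_mul, smul_eq_mul, mul_one, mul_sum, mul_sum]
  refine sum_congr rfl fun x hx => ?_
  obtain ⟨-, rfl⟩ := mem_filter.mp hx
  have hspec : (pifact x : ℝ) * Nat.multinomial univ x = (zeta x).factorial := by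
    exact_mod_cast Nat.multinomial_spec univ x
  have hmultinomial : (Nat.multinomial univ x : ℝ) ≠ 0 := by
    exact_mod_cast (Nat.multinomial_pos univ x).ne'
  rw [Ring.choose_eq_prod_range_div_factorial, ← hspec]
  field_simp
  ring

lemma fracDiffCoeff_add (k : ℕ) (β γ : ℝ) (n : ℕ) :
    fracDiffCoeff k (β + γ) n =
      ∑ m ∈ range (n + 1), fracDiffCoeff k β m * fracDiffCoeff k γ (n - m) := by
  simp only [← coeff_fracDiffSeries, fracDiffSeries_add, coeff_mul]
  exact Nat.sum_antidiagonal_eq_sum_range_succ (fun i j => coeff i (fracDiffSeries k β) *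
    coeff j (fracDiffSeries k γ)) n

lemma abs_div_natCast_le (a : ℝ) (d : ℕ) : |a / d| ≤ |a| := by
  rcases d.eq_zero_or_pos with rfl | hd
  · simp
  · rw [abs_div, Nat.abs_cast]
    exact div_le_self (abs_nonneg a) (by exact_mod_cast hd)

lemma abs_prod_range_sub_le (β : ℝ) (i : ℕ) : |∏ l ∈ range i, (β - l)| ≤ (|β| + i) ^ i := by
  rw [abs_prod]
  calc ∏ l ∈ range i, |β - l| ≤ ∏ _l ∈ range i, (|β| + i) := by
        refine prod_le_prod (fun _ _ => abs_nonneg _) fun l hl => (abs_sub β (l : ℝ)).trans ?_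
        rw [Nat.abs_cast]
        gcongr
        exact (mem_range.mp hl).le
    _ = (|β| + i) ^ i := by rw [prod_const, card_range]

lemma abs_fracDiffCoeff_le (k : ℕ) (β : ℝ) (n : ℕ) :
    |fracDiffCoeff k β n| ≤ #(Omega k n) * (|β| + n + 1) ^ n := by
  rw [← nsmul_eq_mul, fracDiffCoeff]
  refine (abs_sum_le_sum_abs _ _).trans (sum_le_card_nsmul _ _ _ fun x hx => ?_)
  have hζ := zeta_le_of_mem_Omega hx
  have hden : (pifact x : ℝ) * (k : ℝ) ^ zeta x = ((pifact x * k ^ zeta x : ℕ) : ℝ) := by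
    push_cast; rfl
  rw [hden]
  refine (abs_div_natCast_le _ _).trans ?_
  rw [abs_mul, abs_pow, abs_neg, abs_one, one_pow, one_mul]
  calc |∏ l ∈ range (zeta x), (β - l)| ≤ (|β| + zeta x) ^ zeta x := abs_prod_range_sub_le β _
    _ ≤ (|β| + n + 1) ^ zeta x := by
        gcongr ?_ ^ _
        have : (zeta x : ℝ) ≤ n := by exact_mod_cast hζ
        linarith
    _ ≤ (|β| + n + 1) ^ n :=
        pow_le_pow_right₀ (by linarith [abs_nonneg β, n.cast_nonneg (α := ℝ)]) hζ

lemma abs_fracDiffCoeff_mul_natCast_le (k n : ℕ) (α : ℝ) (r : ℕ) :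
    |fracDiffCoeff k (α * r) n| ≤ #(Omega k n) * (|α| + n + 1) ^ n * (2 ^ n) ^ r := by
  have hbase : |α * r| + n + 1 ≤ (|α| + n + 1) * 2 ^ r := by
    have hr : (r : ℝ) + 1 ≤ 2 ^ r := by exact_mod_cast Nat.lt_two_pow_self
    rw [abs_mul, Nat.abs_cast]
    nlinarith [abs_nonneg α, (r.cast_nonneg : (0 : ℝ) ≤ r)]
  calc |fracDiffCoeff k (α * r) n| ≤ #(Omega k n) * (|α * r| + n + 1) ^ n :=
        abs_fracDiffCoeff_le k _ n
    _ ≤ #(Omega k n) * ((|α| + n + 1) * 2 ^ r) ^ n := by gcongr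
    _ = #(Omega k n) * (|α| + n + 1) ^ n * (2 ^ n) ^ r := by
        rw [mul_pow, ← pow_mul, ← pow_mul, mul_comm r n, mul_assoc]

section ExponentialGeneratingFunction

variable {b : ℕ → ℝ} {C K : ℝ}

lemma norm_pow_div_factorial_mul_le (hb : ∀ r, |b r| ≤ C * K ^ r) (x : ℝ) (r : ℕ) :
    ‖x ^ r / r.factorial * b r‖ ≤ C * (|x| * K) ^ r / r.factorial := by
  rw [Real.norm_eq_abs, abs_mul, abs_div, abs_pow, Nat.abs_cast, mul_pow]
  calc |x| ^ r / r.factorial * |b r| ≤ |x| ^ r / r.factorial * (C * K ^ r) := by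
        gcongr; exact hb r
    _ = C * (|x| ^ r * K ^ r) / r.factorial := by ring

lemma summable_pow_div_factorial_mul (hb : ∀ r, |b r| ≤ C * K ^ r) (x : ℝ) :
    Summable fun r => x ^ r / r.factorial * b r :=
  .of_norm_bounded (by simpa only [mul_div_assoc] using
    (Real.summable_pow_div_factorial (|x| * K)).mul_left C) (norm_pow_div_factorial_mul_le hb x)

lemma hasDerivAt_pow_succ_div_factorial (r : ℕ) (s : ℝ) :
    HasDerivAt (fun s : ℝ => s ^ (r + 1) / (r + 1).factorial) (s ^ r / r.factorial) s := by
  refine ((hasDerivAt_pow (r + 1) s).div_const ((r + 1).factorial : ℝ)).congr_deriv ?_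
  rw [Nat.add_sub_cancel, Nat.factorial_succ, Nat.cast_mul, mul_div_mul_left _ _ (by positivity)]

lemma hasDerivAt_tsum_pow_div_factorial_mul (hK : 0 ≤ K) (hb : ∀ r, |b r| ≤ C * K ^ r) (t : ℝ) :
    HasDerivAt (fun s => ∑' r, s ^ r / r.factorial * b r)
      (∑' r, t ^ r / r.factorial * b (r + 1)) t := by
  have hb' : ∀ r, |b (r + 1)| ≤ C * K * K ^ r := fun r => by
    rw [mul_assoc, ← pow_succ']
    exact hb _
  have hCK : 0 ≤ C * K := by simpa using (abs_nonneg _).trans (hb' 0)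
  have hsplit : (fun s => ∑' r, s ^ r / r.factorial * b r) =
      fun s => b 0 + ∑' r, s ^ (r + 1) / (r + 1).factorial * b (r + 1) := funext fun s => by
    rw [(summable_pow_div_factorial_mul hb s).tsum_eq_zero_add]
    simp
  rw [hsplit]
  refine HasDerivAt.const_add _ ?_
  set R := |t| + 1
  have htR : t ∈ Metric.ball (0 : ℝ) R := by simp [R]
  refine hasDerivAt_tsum_of_isPreconnected
    (u := fun r => C * K * (R * K) ^ r / r.factorial)
    (by simpa only [mul_div_assoc] using (Real.summable_pow_div_factorial (R * K)).mul_left (C * K))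
    Metric.isOpen_ball (convex_ball 0 R).isPreconnected
    (fun r s _ => (hasDerivAt_pow_succ_div_factorial r s).mul_const _)
    (fun r s hs => (norm_pow_div_factorial_mul_le hb' s r).trans ?_) htR
    ((summable_nat_add_iff 1).mpr (summable_pow_div_factorial_mul hb t)) htR
  have hsR : |s| ≤ R := by simpa using (Metric.mem_ball.mp hs).le
  gcongr

end ExponentialGeneratingFunction

lemma hasDerivAt_qk (k : ℕ) (lam α : ℝ) (n : ℕ) (t : ℝ) :
    HasDerivAt (fun s => qk k lam α n s) (-((k * lam) ^ α) *
      ∑' r : ℕ, (-((k * lam) ^ α) * t) ^ r / r.factorial * fracDiffCoeff k (α * ↑(r + 1)) n) t := by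
  have hegf := hasDerivAt_tsum_pow_div_factorial_mul (by positivity)
    (abs_fracDiffCoeff_mul_natCast_le k n α) (-((k * lam) ^ α) * t)
  exact (hegf.comp t ((hasDerivAt_id t).const_mul _)).congr_deriv (by rw [mul_one, mul_comm])

lemma tsum_pow_div_factorial_mul_fracDiffCoeff_succ (k : ℕ) (α x : ℝ) (n : ℕ) :
    ∑' r : ℕ, x ^ r / r.factorial * fracDiffCoeff k (α * ↑(r + 1)) n =
      ∑ m ∈ range (n + 1), fracDiffCoeff k α m *
        ∑' r : ℕ, x ^ r / r.factorial * fracDiffCoeff k (α * r) (n - m) := by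
  have hconv : ∀ r : ℕ, x ^ r / r.factorial * fracDiffCoeff k (α * ↑(r + 1)) n =
      ∑ m ∈ range (n + 1), fracDiffCoeff k α m *
        (x ^ r / r.factorial * fracDiffCoeff k (α * r) (n - m)) := fun r => by
    rw [Nat.cast_succ, mul_add_one, add_comm, fracDiffCoeff_add, mul_sum]
    exact sum_congr rfl fun m _ => by ring
  rw [tsum_congr hconv, Summable.tsum_finsetSum fun m _ =>
    (summable_pow_div_factorial_mul (abs_fracDiffCoeff_mul_natCast_le k (n - m) α) x).mul_left _]
  exact sum_congr rfl fun m _ => tsum_mul_left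

theorem governing_equation_space_fractional_poisson_of_order_k_general
    (k : ℕ) (lam α : ℝ) (n : ℕ) (t : ℝ) :
    deriv (fun s => qk k lam α n s) t =
      -((k * lam) ^ α) * ∑ m ∈ Finset.range (n + 1), ∑ x ∈ Omega k m,
        (-1 : ℝ) ^ zeta x * (∏ l ∈ Finset.range (zeta x), (α - l)) /
          ((pifact x : ℝ) * (k : ℝ) ^ zeta x) * qk k lam α (n - m) t := by
  rw [(hasDerivAt_qk k lam α n t).deriv, tsum_pow_div_factorial_mul_fracDiffCoeff_succ]
  simp only [fracDiffCoeff, sum_mul]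
  rfl

/-- The differential–difference equation governing the pmf of the space-fractional
Poisson process of order `k`:
`(d/dt) q_{α,k}(n,t) = −(kλ)^α ∑_{x, w(x) ≤ n} (−1)^{ζ(x)} (∏_{l<ζ(x)} (α − l)) /
(Π!(x) k^{ζ(x)}) · q_{α,k}(n − w(x), t)`, i.e. `(d/dt)q = −k^α λ^α (1 − (1/k)∑_j B^j)^α q`,
the sum over tuples being grouped by their weight `m = w(x) ≤ n`. -/
theorem governing_equation_space_fractional_poisson_of_order_k
    (k : ℕ) (hk : 1 ≤ k) (lam α : ℝ) (hlam : 0 < lam) (hα : α ∈ Set.Ioo (0 : ℝ) 1)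
    (n : ℕ) (t : ℝ) (ht : 0 < t) :
    deriv (fun s => qk k lam α n s) t =
      -((k * lam) ^ α) * ∑ m ∈ Finset.range (n + 1), ∑ x ∈ Omega k m,
        (-1 : ℝ) ^ zeta x * (∏ l ∈ Finset.range (zeta x), (α - l)) /
          ((pifact x : ℝ) * (k : ℝ) ^ zeta x) * qk k lam α (n - m) t :=
  governing_equation_space_fractional_poisson_of_order_k_general k lam α n t
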